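/- The bilinear functional η(f⁰, f¹) = ∫∫ f⁰(t,t') f¹(t',t)(t - t') dt dt' on the convolution algebra of compactly supported smooth kernels on ℝ is a cyclic 1-cocycle: it satisfies η(f¹, f⁰) = -η(f⁰, f¹) and η(f⁰*f¹, f²) - η(f⁰, f¹*f²) + η(f²*f⁰, f¹) = 0. -/
import Mathlib


open MeasureTheory

/-- The bilinear functional `η(f⁰,f¹) = ∫∫ f⁰(t,t')f¹(t',t)(t-t') dt dt'` on kernels on ℝ. -/
noncomputable def etaCocycle (f g : ℝ × ℝ → ℂ) : ℂ :=
  ∫ t : ℝ, ∫ u : ℝ, f (t, u) * g (u, t) * ((t : ℂ) - (u : ℂ))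

/-- The convolution product of kernels on ℝ: `(f*g)(s,u) = ∫ f(s,t)g(t,u) dt`. -/
noncomputable def kernelConv (f g : ℝ × ℝ → ℂ) : ℝ × ℝ → ℂ :=
  fun p => ∫ u : ℝ, f (p.1, u) * g (u, p.2)


open MeasureTheory Function Set

private lemma out_fst {φ : ℝ × ℝ → ℂ} {a : ℝ} (ha : a ∉ Prod.fst '' tsupport φ) (b : ℝ) :
    φ (a, b) = 0 :=
  image_eq_zero_of_notMem_tsupport (fun hm => ha ⟨(a, b), hm, rfl⟩)

private lemma out_snd {φ : ℝ × ℝ → ℂ} {a : ℝ} (ha : a ∉ Prod.snd '' tsupport φ) (b : ℝ) :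
    φ (b, a) = 0 :=
  image_eq_zero_of_notMem_tsupport (fun hm => ha ⟨(b, a), hm, rfl⟩)

private lemma swap2 (F : ℝ → ℝ → ℂ) (hF : Integrable (fun p : ℝ × ℝ => F p.1 p.2)) :
    ∫ t : ℝ, ∫ u : ℝ, F t u = ∫ t : ℝ, ∫ u : ℝ, F u t := by
  rw [Measure.volume_eq_prod] at hF
  exact integral_integral_swap hF

section triple
variable (F : ℝ → ℝ → ℝ → ℂ)
  (hc : Continuous fun p : ℝ × ℝ × ℝ => F p.1 p.2.1 p.2.2)
  (hs : HasCompactSupport fun p : ℝ × ℝ × ℝ => F p.1 p.2.1 p.2.2)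
include hc hs

private lemma L3 (t u : ℝ) : Integrable (fun v => F t u v) := by
  apply Continuous.integrable_of_hasCompactSupport
  · exact hc.comp (continuous_const.prodMk (continuous_const.prodMk continuous_id))
  · have hK : IsCompact ((fun p : ℝ × ℝ × ℝ => p.2.2) '' tsupport
        (fun p : ℝ × ℝ × ℝ => F p.1 p.2.1 p.2.2)) :=
      IsCompact.image hs (continuous_snd.comp continuous_snd)
    apply HasCompactSupport.intro hK
    intro v hv
    by_contra h0
    exact hv ⟨(t, u, v), subset_tsupport _ h0, rfl⟩

private lemma L2 (t : ℝ) : Integrable (fun q : ℝ × ℝ => F t q.1 q.2) := by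
  apply Continuous.integrable_of_hasCompactSupport
  · exact hc.comp (continuous_const.prodMk continuous_id)
  · have hK : IsCompact ((fun p : ℝ × ℝ × ℝ => p.2) '' tsupport
        (fun p : ℝ × ℝ × ℝ => F p.1 p.2.1 p.2.2)) := IsCompact.image hs continuous_snd
    apply HasCompactSupport.intro hK
    intro q hq
    by_contra h0
    exact hq ⟨(t, q.1, q.2), subset_tsupport _ h0, rfl⟩

private lemma L4' (t : ℝ) : Integrable (fun u : ℝ => ∫ v : ℝ, F t u v) := by
  have h2 := L2 F hc hs t
  rw [Measure.volume_eq_prod] at h2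
  exact h2.integral_prod_left

private lemma L4 : Integrable (fun q : ℝ × ℝ => ∫ v : ℝ, F q.1 q.2 v) := by
  have h1 : Integrable (fun r : (ℝ × ℝ) × ℝ => F r.1.1 r.1.2 r.2)
      ((volume : Measure (ℝ × ℝ)).prod volume) := by
    rw [← Measure.volume_eq_prod]
    apply Continuous.integrable_of_hasCompactSupport
    · exact hc.comp (Homeomorph.prodAssoc ℝ ℝ ℝ).continuous
    · exact hs.comp_homeomorph (Homeomorph.prodAssoc ℝ ℝ ℝ)
  exact h1.integral_prod_left

private lemma L5 : Integrable (fun t : ℝ => ∫ u : ℝ, ∫ v : ℝ, F t u v) := by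
  have h1 : Integrable (fun p : ℝ × ℝ × ℝ => F p.1 p.2.1 p.2.2) :=
    hc.integrable_of_hasCompactSupport hs
  rw [Measure.volume_eq_prod] at h1
  have h2 := h1.integral_prod_left
  have h3 : ∀ t : ℝ, (∫ u : ℝ, ∫ v : ℝ, F t u v) = ∫ q : ℝ × ℝ, F t q.1 q.2 := by
    intro t
    have hi := L2 F hc hs t
    rw [Measure.volume_eq_prod] at hi
    rw [Measure.volume_eq_prod (α := ℝ) (β := ℝ)]
    exact (integral_prod _ hi).symm
  simp only [h3]
  exact h2

end triple


/-- `η` is a cyclic 1-cocycle on the convolution algebra of compactly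
supported smooth kernels on ℝ: it is antisymmetric, `η(f¹,f⁰) = -η(f⁰,f¹)`, and satisfies
the Hochschild cocycle identity `η(f⁰*f¹,f²) - η(f⁰,f¹*f²) + η(f²*f⁰,f¹) = 0`. -/
theorem stmt_11 (f g h : ℝ × ℝ → ℂ)
    (hf : ContDiff ℝ (⊤ : ℕ∞) f) (hfc : HasCompactSupport f)
    (hg : ContDiff ℝ (⊤ : ℕ∞) g) (hgc : HasCompactSupport g)
    (hh : ContDiff ℝ (⊤ : ℕ∞) h) (hhc : HasCompactSupport h) :
    etaCocycle g f = - etaCocycle f g ∧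
      etaCocycle (kernelConv f g) h - etaCocycle f (kernelConv g h) +
        etaCocycle (kernelConv h f) g = 0 := by
  have hfC : Continuous f := hf.continuous
  have hgC : Continuous g := hg.continuous
  have hhC : Continuous h := hh.continuous
  set S : Set ℝ := ((((Prod.fst '' tsupport f ∪ Prod.snd '' tsupport f) ∪
      Prod.fst '' tsupport g) ∪ Prod.snd '' tsupport g) ∪ Prod.fst '' tsupport h) ∪
      Prod.snd '' tsupport h with hS
  have hScomp : IsCompact S :=
    (((((IsCompact.image hfc continuous_fst).union (IsCompact.image hfc continuous_snd)).union
      (IsCompact.image hgc continuous_fst)).union (IsCompact.image hgc continuous_snd)).union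
      (IsCompact.image hhc continuous_fst)).union (IsCompact.image hhc continuous_snd)
  have zf1 : ∀ a ∉ S, ∀ b, f (a, b) = 0 := fun a ha b =>
    out_fst (fun hm => ha (by simp only [hS, Set.mem_union]; tauto)) b
  have zf2 : ∀ a ∉ S, ∀ b, f (b, a) = 0 := fun a ha b =>
    out_snd (fun hm => ha (by simp only [hS, Set.mem_union]; tauto)) b
  have zg1 : ∀ a ∉ S, ∀ b, g (a, b) = 0 := fun a ha b =>
    out_fst (fun hm => ha (by simp only [hS, Set.mem_union]; tauto)) b
  have zg2 : ∀ a ∉ S, ∀ b, g (b, a) = 0 := fun a ha b =>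
    out_snd (fun hm => ha (by simp only [hS, Set.mem_union]; tauto)) b
  have zh1 : ∀ a ∉ S, ∀ b, h (a, b) = 0 := fun a ha b =>
    out_fst (fun hm => ha (by simp only [hS, Set.mem_union]; tauto)) b
  have zh2 : ∀ a ∉ S, ∀ b, h (b, a) = 0 := fun a ha b =>
    out_snd (fun hm => ha (by simp only [hS, Set.mem_union]; tauto)) b
  -- antisymmetry
  have hanti : etaCocycle g f = - etaCocycle f g := by
    have hint : Integrable (fun p : ℝ × ℝ =>
        g (p.1, p.2) * f (p.2, p.1) * ((p.1 : ℂ) - (p.2 : ℂ))) := by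
      apply Continuous.integrable_of_hasCompactSupport
      · fun_prop
      · apply HasCompactSupport.intro (hScomp.prod hScomp)
        rintro ⟨a, b⟩ hp
        simp only [Set.mem_prod, not_and_or] at hp
        rcases hp with h1 | h2
        · simp [zg1 a h1 b]
        · simp [zg2 b h2 a]
    have e : (∫ t : ℝ, ∫ u : ℝ, g (t, u) * f (u, t) * ((t : ℂ) - (u : ℂ)))
        = ∫ t : ℝ, ∫ u : ℝ, g (u, t) * f (t, u) * ((u : ℂ) - (t : ℂ)) :=
      swap2 (fun t u => g (t, u) * f (u, t) * ((t : ℂ) - (u : ℂ))) hint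
    unfold etaCocycle
    rw [e, ← integral_neg]
    congr 1; funext t
    rw [← integral_neg]
    congr 1; funext u
    ring
  refine ⟨hanti, ?_⟩
  have hsMk : ∀ φ : ℝ × ℝ × ℝ → ℂ,
      (∀ a b c : ℝ, a ∉ S ∨ b ∉ S ∨ c ∉ S → φ (a, b, c) = 0) → HasCompactSupport φ := by
    intro φ hφ
    apply HasCompactSupport.intro (hScomp.prod (hScomp.prod hScomp))
    rintro ⟨a, b, c⟩ hp
    apply hφ
    simp only [Set.mem_prod, not_and_or] at hp
    tauto
  -- the six triple integrands
  have hc2 : Continuous fun p : ℝ × ℝ × ℝ =>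
      f (p.1, p.2.2) * g (p.2.2, p.2.1) * h (p.2.1, p.1) * ((p.1 : ℂ) - (p.2.2 : ℂ)) := by
    fun_prop
  have hs2 : HasCompactSupport fun p : ℝ × ℝ × ℝ =>
      f (p.1, p.2.2) * g (p.2.2, p.2.1) * h (p.2.1, p.1) * ((p.1 : ℂ) - (p.2.2 : ℂ)) := by
    refine hsMk _ ?_
    rintro a b c (h1 | h2 | h3)
    · simp [zf1 a h1 c]
    · simp [zh1 b h2 a]
    · simp [zg1 c h3 b]
  have hc3 : Continuous fun p : ℝ × ℝ × ℝ =>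
      f (p.1, p.2.2) * g (p.2.2, p.2.1) * h (p.2.1, p.1) * ((p.2.1 : ℂ) - (p.2.2 : ℂ)) := by
    fun_prop
  have hs3 : HasCompactSupport fun p : ℝ × ℝ × ℝ =>
      f (p.1, p.2.2) * g (p.2.2, p.2.1) * h (p.2.1, p.1) * ((p.2.1 : ℂ) - (p.2.2 : ℂ)) := by
    refine hsMk _ ?_
    rintro a b c (h1 | h2 | h3)
    · simp [zf1 a h1 c]
    · simp [zh1 b h2 a]
    · simp [zg1 c h3 b]
  have hcFa : Continuous fun p : ℝ × ℝ × ℝ =>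
      f (p.1, p.2.1) * g (p.2.1, p.2.2) * h (p.2.2, p.1) * ((p.1 : ℂ) - (p.2.1 : ℂ)) := by
    fun_prop
  have hsFa : HasCompactSupport fun p : ℝ × ℝ × ℝ =>
      f (p.1, p.2.1) * g (p.2.1, p.2.2) * h (p.2.2, p.1) * ((p.1 : ℂ) - (p.2.1 : ℂ)) := by
    refine hsMk _ ?_
    rintro a b c (h1 | h2 | h3)
    · simp [zf1 a h1 b]
    · simp [zg1 b h2 c]
    · simp [zh1 c h3 a]
  have hcFb : Continuous fun p : ℝ × ℝ × ℝ =>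
      h (p.1, p.2.2) * f (p.2.2, p.2.1) * g (p.2.1, p.1) * ((p.1 : ℂ) - (p.2.1 : ℂ)) := by
    fun_prop
  have hsFb : HasCompactSupport fun p : ℝ × ℝ × ℝ =>
      h (p.1, p.2.2) * f (p.2.2, p.2.1) * g (p.2.1, p.1) * ((p.1 : ℂ) - (p.2.1 : ℂ)) := by
    refine hsMk _ ?_
    rintro a b c (h1 | h2 | h3)
    · simp [zh1 a h1 c]
    · simp [zg1 b h2 a]
    · simp [zf1 c h3 b]
  have hcFc : Continuous fun p : ℝ × ℝ × ℝ =>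
      h (p.1, p.2.1) * f (p.2.1, p.2.2) * g (p.2.2, p.1) * ((p.1 : ℂ) - (p.2.2 : ℂ)) := by
    fun_prop
  have hsFc : HasCompactSupport fun p : ℝ × ℝ × ℝ =>
      h (p.1, p.2.1) * f (p.2.1, p.2.2) * g (p.2.2, p.1) * ((p.1 : ℂ) - (p.2.2 : ℂ)) := by
    refine hsMk _ ?_
    rintro a b c (h1 | h2 | h3)
    · simp [zh1 a h1 b]
    · simp [zf1 b h2 c]
    · simp [zg1 c h3 a]
  -- expansions of the three terms as triple integrals
  have E1 : etaCocycle (kernelConv f g) h = ∫ t : ℝ, ∫ u : ℝ, ∫ v : ℝ,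
      f (t, v) * g (v, u) * h (u, t) * ((t : ℂ) - (u : ℂ)) := by
    simp only [etaCocycle, kernelConv]
    congr 1; funext t; congr 1; funext u
    rw [mul_assoc, ← integral_mul_const]
    congr 1; funext v; ring
  have E2 : etaCocycle f (kernelConv g h) = ∫ t : ℝ, ∫ u : ℝ, ∫ v : ℝ,
      f (t, u) * g (u, v) * h (v, t) * ((t : ℂ) - (u : ℂ)) := by
    simp only [etaCocycle, kernelConv]
    congr 1; funext t; congr 1; funext u
    rw [mul_comm (f (t, u)), mul_assoc, ← integral_mul_const]
    congr 1; funext v; ring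
  have E3 : etaCocycle (kernelConv h f) g = ∫ t : ℝ, ∫ u : ℝ, ∫ v : ℝ,
      h (t, v) * f (v, u) * g (u, t) * ((t : ℂ) - (u : ℂ)) := by
    simp only [etaCocycle, kernelConv]
    congr 1; funext t; congr 1; funext u
    rw [mul_assoc, ← integral_mul_const]
    congr 1; funext v; ring
  have E2' : (∫ t : ℝ, ∫ u : ℝ, ∫ v : ℝ,
        f (t, u) * g (u, v) * h (v, t) * ((t : ℂ) - (u : ℂ)))
      = ∫ t : ℝ, ∫ u : ℝ, ∫ v : ℝ,
        f (t, v) * g (v, u) * h (u, t) * ((t : ℂ) - (v : ℂ)) := by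
    congr 1; funext t
    exact swap2 (fun u v => f (t, u) * g (u, v) * h (v, t) * ((t : ℂ) - (u : ℂ)))
      (L2 (fun a b c => f (a, b) * g (b, c) * h (c, a) * ((a : ℂ) - (b : ℂ))) hcFa hsFa t)
  have E3' : (∫ t : ℝ, ∫ u : ℝ, ∫ v : ℝ,
        h (t, v) * f (v, u) * g (u, t) * ((t : ℂ) - (u : ℂ)))
      = ∫ t : ℝ, ∫ u : ℝ, ∫ v : ℝ,
        h (t, u) * f (u, v) * g (v, t) * ((t : ℂ) - (v : ℂ)) := by
    congr 1; funext t
    exact swap2 (fun u v => h (t, v) * f (v, u) * g (u, t) * ((t : ℂ) - (u : ℂ)))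
      (L2 (fun a b c => h (a, c) * f (c, b) * g (b, a) * ((a : ℂ) - (b : ℂ))) hcFb hsFb t)
  have E3'' : (∫ t : ℝ, ∫ u : ℝ, ∫ v : ℝ,
        h (t, u) * f (u, v) * g (v, t) * ((t : ℂ) - (v : ℂ)))
      = ∫ t : ℝ, ∫ u : ℝ, ∫ v : ℝ,
        h (u, t) * f (t, v) * g (v, u) * ((u : ℂ) - (v : ℂ)) :=
    swap2 (fun t u => ∫ v : ℝ, h (t, u) * f (u, v) * g (v, t) * ((t : ℂ) - (v : ℂ)))
      (L4 (fun a b c => h (a, b) * f (b, c) * g (c, a) * ((a : ℂ) - (c : ℂ))) hcFc hsFc)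
  have E3''' : (∫ t : ℝ, ∫ u : ℝ, ∫ v : ℝ,
        h (u, t) * f (t, v) * g (v, u) * ((u : ℂ) - (v : ℂ)))
      = ∫ t : ℝ, ∫ u : ℝ, ∫ v : ℝ,
        f (t, v) * g (v, u) * h (u, t) * ((u : ℂ) - (v : ℂ)) := by
    congr 1; funext t; congr 1; funext u; congr 1; funext v; ring
  -- the cocycle identity at the level of triple integrals
  have split : (∫ t : ℝ, ∫ u : ℝ, ∫ v : ℝ,
        f (t, v) * g (v, u) * h (u, t) * ((t : ℂ) - (u : ℂ)))
      = (∫ t : ℝ, ∫ u : ℝ, ∫ v : ℝ,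
          f (t, v) * g (v, u) * h (u, t) * ((t : ℂ) - (v : ℂ)))
        - ∫ t : ℝ, ∫ u : ℝ, ∫ v : ℝ,
          f (t, v) * g (v, u) * h (u, t) * ((u : ℂ) - (v : ℂ)) := by
    have e0 : ∀ t u : ℝ, (∫ v : ℝ, f (t, v) * g (v, u) * h (u, t) * ((t : ℂ) - (u : ℂ)))
        = (∫ v : ℝ, f (t, v) * g (v, u) * h (u, t) * ((t : ℂ) - (v : ℂ)))
          - ∫ v : ℝ, f (t, v) * g (v, u) * h (u, t) * ((u : ℂ) - (v : ℂ)) := by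
      intro t u
      rw [← integral_sub
        (L3 (fun a b c => f (a, c) * g (c, b) * h (b, a) * ((a : ℂ) - (c : ℂ))) hc2 hs2 t u)
        (L3 (fun a b c => f (a, c) * g (c, b) * h (b, a) * ((b : ℂ) - (c : ℂ))) hc3 hs3 t u)]
      congr 1; funext v; ring
    have e1 : ∀ t : ℝ, (∫ u : ℝ, ∫ v : ℝ,
          f (t, v) * g (v, u) * h (u, t) * ((t : ℂ) - (u : ℂ)))
        = (∫ u : ℝ, ∫ v : ℝ, f (t, v) * g (v, u) * h (u, t) * ((t : ℂ) - (v : ℂ)))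
          - ∫ u : ℝ, ∫ v : ℝ, f (t, v) * g (v, u) * h (u, t) * ((u : ℂ) - (v : ℂ)) := by
      intro t
      simp only [e0]
      exact integral_sub
        (L4' (fun a b c => f (a, c) * g (c, b) * h (b, a) * ((a : ℂ) - (c : ℂ))) hc2 hs2 t)
        (L4' (fun a b c => f (a, c) * g (c, b) * h (b, a) * ((b : ℂ) - (c : ℂ))) hc3 hs3 t)
    simp only [e1]
    exact integral_sub
      (L5 (fun a b c => f (a, c) * g (c, b) * h (b, a) * ((a : ℂ) - (c : ℂ))) hc2 hs2)
      (L5 (fun a b c => f (a, c) * g (c, b) * h (b, a) * ((b : ℂ) - (c : ℂ))) hc3 hs3)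
  rw [E1, E2.trans E2', E3.trans (E3'.trans (E3''.trans E3''')), split]
  ring
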